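/- Let (L_α) be a family of orthocomplemented simple closure spaces. If the box product ⊼_α L_α has the covering property or is orthomodular, then there is at most one β such that L_β is not the power set of Σ_β. (Aerts' theorem.) -/

import Mathlib

/-!
If two factors `L β`, `L γ` are not power sets, each has two distinct non-orthogonal points
`pᵢ, qᵢ`: otherwise every subset would be an intersection of orthocomplements of points.
The points `u = (p₁, p₂)` and `v = (q₁, q₂)`, equal elsewhere, form a closed pair `{u, v}` of the
box product, and `v` is non-orthogonal to `u` in every coordinate, so `{u, v} ∧ u^# = 0`,
which contradicts orthomodularity.

The covering property yields the exchange property in the box product, hence in every factor,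
and there exchange together with the orthocomplementation gives a third point `rᵢ` on each
line `pᵢ ∨ qᵢ`. With `s = (r₁, r₂)` and `w = (p₁, q₂)`, the point `w` lies in `{u, v} ∨ s`, but
`s` does not lie in `{u, v} ∨ w ⊆ {x | x β = p₁ ∨ x γ = q₂}`: exchange fails in the box product.
-/

open Set

/-- A simple closure space on `σ`: a family of subsets closed under arbitrary
intersections (the empty intersection giving `univ`), containing `∅` and all singletons. -/
def IsSCS {σ : Type*} (L : Set (Set σ)) : Prop :=
  (∀ ω ⊆ L, ⋂₀ ω ∈ L) ∧ (∅ : Set σ) ∈ L ∧ ∀ p : σ, {p} ∈ L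

/-- The join of a subset `A` of atoms/points in a simple closure space `L`. -/
def sJoin {σ : Type*} (L : Set (Set σ)) (A : Set σ) : Set σ := ⋂₀ {b ∈ L | A ⊆ b}

/-- `b` covers `a` in `L`. -/
def CoversIn {σ : Type*} (L : Set (Set σ)) (a b : Set σ) : Prop :=
  a ⊂ b ∧ ∀ c ∈ L, a ⊆ c → c ⊆ b → c = a ∨ c = b

/-- `x` is a coatom of `L`. -/
def IsCoatomOf {σ : Type*} (L : Set (Set σ)) (x : Set σ) : Prop :=
  x ∈ L ∧ x ≠ univ ∧ ∀ c ∈ L, x ⊆ c → c = x ∨ c = univ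

/-- `L` is coatomistic: every element is a meet of coatoms. -/
def Coatomistic {σ : Type*} (L : Set (Set σ)) : Prop :=
  ∀ a ∈ L, a = ⋂₀ {x | IsCoatomOf L x ∧ a ⊆ x}

/-- Covering property: for any atom `p` and `a ∈ L` with `p ∧ a = 0`,
`p ∨ a` covers `a`. -/
def HasCovProp {σ : Type*} (L : Set (Set σ)) : Prop :=
  ∀ p : σ, ∀ a ∈ L, p ∉ a → CoversIn L a (sJoin L (insert p a))

/-- Covering property of the dual lattice of `L`. -/
def HasDualCovProp {σ : Type*} (L : Set (Set σ)) : Prop :=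
  ∀ x, IsCoatomOf L x → ∀ a ∈ L, sJoin L (x ∪ a) = univ → CoversIn L (x ∩ a) a

/-- `f` is an orthocomplementation of `L`: an order-reversing involution with
`a ∨ f a = 1` for all `a ∈ L`. -/
def IsOrthoOn {σ : Type*} (L : Set (Set σ)) (f : Set σ → Set σ) : Prop :=
  (∀ a ∈ L, f a ∈ L) ∧ (∀ a ∈ L, f (f a) = a) ∧
  (∀ a ∈ L, ∀ b ∈ L, a ⊆ b → f b ⊆ f a) ∧
  (∀ a ∈ L, ∀ b ∈ L, a ∪ f a ⊆ b → b = univ)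

/-- The permutation `g` of the points induces an automorphism of `L`. -/
def IsAutoOn {σ : Type*} (L : Set (Set σ)) (g : Equiv.Perm σ) : Prop :=
  ∀ a, a ∈ L ↔ g '' a ∈ L

/-- `L` contains `MO₃`: three distinct atoms `p, q, r` such that `p ∨ q`
covers each of them. -/
def ContainsMO3 {σ : Type*} (L : Set (Set σ)) : Prop :=
  ∃ p q r : σ, p ≠ q ∧ p ≠ r ∧ q ≠ r ∧
    CoversIn L {p} (sJoin L {p, q}) ∧ CoversIn L {q} (sJoin L {p, q}) ∧
    CoversIn L {r} (sJoin L {p, q})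

/-- `L` contains `MO₄`: four distinct atoms `p, q, r, s` such that `p ∨ q`
covers each of them. -/
def ContainsMO4 {σ : Type*} (L : Set (Set σ)) : Prop :=
  ∃ p q r s : σ, p ≠ q ∧ p ≠ r ∧ p ≠ s ∧ q ≠ r ∧ q ≠ s ∧ r ≠ s ∧
    CoversIn L {p} (sJoin L {p, q}) ∧ CoversIn L {q} (sJoin L {p, q}) ∧
    CoversIn L {r} (sJoin L {p, q}) ∧ CoversIn L {s} (sJoin L {p, q})

/-- A connected covering of the point set of `L`. -/
def IsConnCover {σ : Type*} (L : Set (Set σ)) (𝒜 : Set (Set σ)) : Prop :=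
  ⋃₀ 𝒜 = Set.univ ∧
  (∀ A ∈ 𝒜, ∃ p q : σ, p ∈ A ∧ q ∈ A ∧ p ≠ q) ∧
  (∀ A ∈ 𝒜, ∀ p ∈ A, ∀ q ∈ A, p ≠ q → ∃ r, r ∈ sJoin L {p, q} ∧ r ≠ p ∧ r ≠ q) ∧
  (∀ p q : σ, ∃ n : ℕ, ∃ c : Fin (n + 1) → Set σ, (∀ i, c i ∈ 𝒜) ∧
    p ∈ c 0 ∧ q ∈ c (Fin.last n) ∧
    ∀ i : Fin n, ∃ x y : σ, x ≠ y ∧ (x ∈ c i.castSucc ∧ x ∈ c i.succ) ∧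
      (y ∈ c i.castSucc ∧ y ∈ c i.succ))

/-- `L` is weakly connected: `L ≠ 2` and there is a connected covering. -/
def WeaklyConnected {σ : Type*} (L : Set (Set σ)) : Prop :=
  (∃ p q : σ, p ≠ q) ∧ ∃ 𝒜, IsConnCover L 𝒜

/-- Restriction of `L` to the subset `e`, as a family of subsets of `↥e`. -/
def restrictCS {σ : Type*} (L : Set (Set σ)) (e : Set σ) : Set (Set e) :=
  {B | ∃ a ∈ L, a ⊆ e ∧ B = Subtype.val ⁻¹' a}

/-- Center of an orthocomplemented simple closure space: elements whose
orthocomplement is the set complement. -/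
def centerOf {σ : Type*} (L : Set (Set σ)) (f : Set σ → Set σ) : Set (Set σ) :=
  {a ∈ L | f a = aᶜ}

/-- Central cover of a point `p`. -/
def centralCover {σ : Type*} (L : Set (Set σ)) (f : Set σ → Set σ) (p : σ) : Set σ :=
  ⋂₀ {a ∈ centerOf L f | p ∈ a}

section Family

variable {Ω : Type*} {X : Ω → Type*}

/-- `⋃_α π_α⁻¹ (a α)`. -/
def cylUnion (a : ∀ α, Set (X α)) : Set (∀ α, X α) := {p | ∃ α, p α ∈ a α}

/-- `p[B, β]`: the point `p` with its `β`-th coordinate varying over `B`. -/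
def pSub (p : ∀ α, X α) (β : Ω) (B : Set (X β)) : Set (∀ α, X α) :=
  {q | q β ∈ B ∧ ∀ α, α ≠ β → q α = p α}

/-- The section `R_β[p]` of `R ⊆ ∏_α X α`. -/
def sect (R : Set (∀ α, X α)) (β : Ω) (p : ∀ α, X α) : Set (X β) :=
  {q | ∃ r ∈ R, r β = q ∧ ∀ α, α ≠ β → r α = p α}

/-- The box product `⊼_α L_α`: all nonempty intersections of the sets
`⋃_α π_α⁻¹ (a α)`. -/
def boxProd (L : ∀ α, Set (Set (X α))) : Set (Set (∀ α, X α)) :=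
  {A | ∃ ω ⊆ {B | ∃ a : ∀ α, Set (X α), (∀ α, a α ∈ L α) ∧ B = cylUnion a},
    ω.Nonempty ∧ A = ⋂₀ ω}

/-- The Fraser product `⊻_α L_α`: all `R` whose sections all lie in the factors. -/
def fraserProd (L : ∀ α, Set (Set (X α))) : Set (Set (∀ α, X α)) :=
  {R | ∀ β, ∀ p : ∀ α, X α, sect R β p ∈ L β}

/-- `M` is a weak tensor product of the family `L`: axioms P1–P3. -/
def IsWTP (L : ∀ α, Set (Set (X α))) (M : Set (Set (∀ α, X α))) : Prop :=
  IsSCS M ∧ (∀ a : ∀ α, Set (X α), (∀ α, a α ∈ L α) → cylUnion a ∈ M) ∧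
  (∀ p : ∀ α, X α, ∀ β, ∀ B : Set (X β), pSub p β B ∈ M → B ∈ L β)

/-- The closure operator `⋁_β R = ⋃_p p[⋁ R_β[p]]`. -/
def vJoin (L : ∀ α, Set (Set (X α))) (β : Ω) (R : Set (∀ α, X α)) : Set (∀ α, X α) :=
  ⋃ p : ∀ α, X α, pSub p β (sJoin (L β) (sect R β p))

/-- The orthocomplementation `#` induced on the box product by
orthocomplementations of the factors. -/
def sharp (f : ∀ α, Set (X α) → Set (X α)) (a : Set (∀ α, X α)) : Set (∀ α, X α) :=
  {p | ∀ q ∈ a, ∃ α, p α ∈ f α {q α}}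

end Family

section Binary

variable {X₁ X₂ : Type*}

/-- `a₁ × Σ₂ ∪ Σ₁ × a₂`. -/
def cylUnion₂ (a₁ : Set X₁) (a₂ : Set X₂) : Set (X₁ × X₂) := {p | p.1 ∈ a₁ ∨ p.2 ∈ a₂}

/-- Binary box product. -/
def boxProd₂ (L₁ : Set (Set X₁)) (L₂ : Set (Set X₂)) : Set (Set (X₁ × X₂)) :=
  {A | ∃ ω ⊆ {B | ∃ a₁ ∈ L₁, ∃ a₂ ∈ L₂, B = cylUnion₂ a₁ a₂}, ω.Nonempty ∧ A = ⋂₀ ω}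

/-- Binary Fraser product. -/
def fraserProd₂ (L₁ : Set (Set X₁)) (L₂ : Set (Set X₂)) : Set (Set (X₁ × X₂)) :=
  {R | (∀ p₁, {q | (p₁, q) ∈ R} ∈ L₂) ∧ (∀ p₂, {q | (q, p₂) ∈ R} ∈ L₁)}

/-- Binary weak tensor product: axioms P1–P3. -/
def IsWTP₂ (L₁ : Set (Set X₁)) (L₂ : Set (Set X₂)) (M : Set (Set (X₁ × X₂))) : Prop :=
  IsSCS M ∧ (∀ a₁ ∈ L₁, ∀ a₂ ∈ L₂, cylUnion₂ a₁ a₂ ∈ M) ∧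
  (∀ p₁ : X₁, ∀ A₂ : Set X₂, {p₁} ×ˢ A₂ ∈ M → A₂ ∈ L₂) ∧
  (∀ p₂ : X₂, ∀ A₁ : Set X₁, A₁ ×ˢ {p₂} ∈ M → A₁ ∈ L₁)

/-- The simple closure space `MO_Σ`, containing only `∅`, `Σ` and the singletons. -/
def MOspace (X : Type*) : Set (Set X) := {∅, univ} ∪ {A | ∃ p, A = {p}}

end Binary

section ClosureSpace

variable {σ : Type*} {L : Set (Set σ)}

theorem subset_sJoin (S : Set σ) : S ⊆ sJoin L S :=
  fun _ hx => mem_sInter.2 fun _ hb => hb.2 hx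

theorem sJoin_subset {S b : Set σ} (hb : b ∈ L) (hS : S ⊆ b) : sJoin L S ⊆ b :=
  sInter_subset_of_mem ⟨hb, hS⟩

theorem sJoin_mem (hL : IsSCS L) (S : Set σ) : sJoin L S ∈ L :=
  hL.1 _ (sep_subset _ _)

theorem sJoin_eq_of_mem {a : Set σ} (ha : a ∈ L) : sJoin L a = a :=
  (sJoin_subset ha subset_rfl).antisymm (subset_sJoin a)

theorem IsSCS.inter_mem (hL : IsSCS L) {a b : Set σ} (ha : a ∈ L) (hb : b ∈ L) :
    a ∩ b ∈ L := by
  simpa using hL.1 {a, b} (pair_subset ha hb)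

def HasExchange (L : Set (Set σ)) : Prop :=
  ∀ m ∈ L, ∀ y y' : σ, y ∉ m → y' ∉ m →
    y' ∈ sJoin L (insert y m) → y ∈ sJoin L (insert y' m)

theorem HasCovProp.hasExchange (hL : IsSCS L) (hcov : HasCovProp L) : HasExchange L := by
  intro m hm y y' hy hy' hy'y
  by_contra hyy'
  have hm_sub : m ⊆ sJoin L (insert y' m) := (subset_insert _ _).trans (subset_sJoin _)
  have h_sub : sJoin L (insert y' m) ⊆ sJoin L (insert y m) :=
    sJoin_subset (sJoin_mem hL _)
      (insert_subset hy'y ((subset_insert _ _).trans (subset_sJoin _)))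
  rcases (hcov y m hm hy).2 _ (sJoin_mem hL _) hm_sub h_sub with h | h
  · exact hy' (h ▸ subset_sJoin _ (mem_insert _ _))
  · exact hyy' (h ▸ subset_sJoin _ (mem_insert _ _))

def IsOrthomodularOn (L : Set (Set σ)) (g : Set σ → Set σ) : Prop :=
  ∀ a ∈ L, ∀ b ∈ L, a ⊆ b → b = sJoin L (a ∪ (b ∩ g a))

namespace IsOrthoOn

variable {f : Set σ → Set σ}

theorem apply_empty (hL : IsSCS L) (hf : IsOrthoOn L f) : f ∅ = univ :=
  hf.2.2.2 ∅ hL.2.1 (f ∅) (hf.1 ∅ hL.2.1) (by simp)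

theorem eq_univ_of_apply_eq_empty (hL : IsSCS L) (hf : IsOrthoOn L f) {a : Set σ}
    (ha : a ∈ L) (hfa : f a = ∅) : a = univ := by
  rw [← hf.2.1 a ha, hfa, hf.apply_empty hL]

theorem notMem_apply_singleton (hL : IsSCS L) (hf : IsOrthoOn L f) (p : σ) : p ∉ f {p} := by
  intro hp
  have hfp : f {p} = univ :=
    hf.2.2.2 {p} (hL.2.2 p) _ (hf.1 _ (hL.2.2 p)) (union_subset (singleton_subset_iff.2 hp) le_rfl)
  have hffp := hf.2.1 _ (hL.2.2 p)
  rw [hfp, ← hf.apply_empty hL, hf.2.1 _ hL.2.1] at hffp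
  exact singleton_ne_empty p hffp.symm

end IsOrthoOn

end ClosureSpace

section Superposition

variable {σ : Type*} {L : Set (Set σ)} {f : Set σ → Set σ}

theorem IsOrthoOn.exists_ne_notMem_of_ne_univ (hf : IsOrthoOn L f) (hL : IsSCS L)
    (hne : L ≠ univ) : ∃ p q : σ, q ≠ p ∧ q ∉ f {p} := by
  by_contra! horth
  refine hne (eq_univ_of_forall fun A => ?_)
  have hA : A = ⋂₀ {S | ∃ t ∉ A, S = f {t}} := by
    ext x
    refine ⟨fun hx => ?_, fun hx => ?_⟩
    · rintro _ ⟨t, ht, rfl⟩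
      exact horth t x (by rintro rfl; exact ht hx)
    · by_contra hxA
      exact hf.notMem_apply_singleton hL x (hx _ ⟨x, hxA, rfl⟩)
  rw [hA]
  exact hL.1 _ (by rintro _ ⟨t, -, rfl⟩; exact hf.1 _ (hL.2.2 t))

theorem IsOrthoOn.sJoin_insert_eq_univ (hf : IsOrthoOn L f) (hL : IsSCS L) {p q : σ}
    (hpq : {p, q} ∈ L) (hq : q ∉ f {p}) : sJoin L (insert p (f {p} ∩ f {q})) = univ := by
  have hm : f {p} ∩ f {q} ∈ L := hL.inter_mem (hf.1 _ (hL.2.2 p)) (hf.1 _ (hL.2.2 q))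
  have hC := sJoin_mem hL (insert p (f {p} ∩ f {q}))
  have hfm : f (f {p} ∩ f {q}) ⊆ {p, q} := by
    have h := hf.2.2.1 _ (hf.1 _ hpq) _ hm <| subset_inter
      (hf.2.2.1 _ (hL.2.2 p) _ hpq (by simp)) (hf.2.2.1 _ (hL.2.2 q) _ hpq (by simp))
    rwa [hf.2.1 _ hpq] at h
  refine hf.eq_univ_of_apply_eq_empty hL hC (eq_empty_of_forall_notMem fun x hx => ?_)
  have hx_pq := hfm (hf.2.2.1 _ hm _ hC ((subset_insert _ _).trans (subset_sJoin _)) hx)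
  have hx_fp : x ∈ f {p} :=
    hf.2.2.1 _ (hL.2.2 p) _ hC (singleton_subset_iff.2 (subset_sJoin _ (mem_insert _ _))) hx
  rcases hx_pq with rfl | rfl
  · exact hf.notMem_apply_singleton hL x hx_fp
  · exact hq hx_fp

theorem HasExchange.exists_superposition (hex : HasExchange L) (hL : IsSCS L)
    (hf : IsOrthoOn L f) {p q : σ} (hqp : q ≠ p) (hq : q ∉ f {p}) :
    ∃ r, r ≠ p ∧ r ≠ q ∧ p ∈ sJoin L {r, q} ∧ q ∈ sJoin L {r, p} := by
  obtain ⟨r, hr, hrp, hrq⟩ : ∃ r ∈ sJoin L {p, q}, r ≠ p ∧ r ≠ q := by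
    -- otherwise `p ∨ (p⊥ ∧ q⊥) = 1`, and exchanging `p` for a point of `p⊥ \ q⊥` puts `p` in `p⊥`
    by_contra! hpair
    have hpq : sJoin L {p, q} = {p, q} :=
      (subset_sJoin _).antisymm' fun r hr => or_iff_not_imp_left.2 (hpair r hr)
    have hpq_mem : ({p, q} : Set σ) ∈ L := hpq ▸ sJoin_mem hL _
    obtain ⟨x, hxp, hxq⟩ : (f {p} \ f {q}).Nonempty := by
      refine sdiff_nonempty.2 fun hsub => hqp ?_
      have h := hf.2.2.1 _ (hf.1 _ (hL.2.2 p)) _ (hf.1 _ (hL.2.2 q)) hsub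
      rw [hf.2.1 _ (hL.2.2 p), hf.2.1 _ (hL.2.2 q)] at h
      exact h rfl
    have hp := hf.notMem_apply_singleton hL p
    have hpx : p ∈ sJoin L (insert x (f {p} ∩ f {q})) :=
      hex _ (hL.inter_mem (hf.1 _ (hL.2.2 p)) (hf.1 _ (hL.2.2 q))) p x
        (fun h => hp h.1) (fun h => hxq h.2)
        (by rw [hf.sJoin_insert_eq_univ hL hpq_mem hq]; trivial)
    exact hp (sJoin_subset (hf.1 _ (hL.2.2 p)) (insert_subset hxp inter_subset_left) hpx)
  refine ⟨r, hrp, hrq, ?_, ?_⟩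
  · exact hex _ (hL.2.2 q) p r hqp.symm hrq hr
  · exact hex _ (hL.2.2 p) q r hqp hrp (by rwa [pair_comm])

end Superposition

section BoxProduct

variable {Ω : Type*} {X : Ω → Type*} {L : ∀ α, Set (Set (X α))}

theorem cylUnion_mem_boxProd {a : ∀ α, Set (X α)} (ha : ∀ α, a α ∈ L α) :
    cylUnion a ∈ boxProd L :=
  ⟨{cylUnion a}, singleton_subset_iff.2 ⟨a, ha, rfl⟩, singleton_nonempty _,
    (sInter_singleton _).symm⟩

theorem mem_sJoin_boxProd_iff {S : Set (∀ α, X α)} {x : ∀ α, X α} :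
    x ∈ sJoin (boxProd L) S ↔
      ∀ a : ∀ α, Set (X α), (∀ α, a α ∈ L α) → S ⊆ cylUnion a → x ∈ cylUnion a := by
  refine ⟨fun hx a ha hS => sJoin_subset (cylUnion_mem_boxProd ha) hS hx, fun hx => ?_⟩
  rintro _ ⟨⟨ω, hω, -, rfl⟩, hS⟩ B hB
  obtain ⟨a, ha, rfl⟩ := hω hB
  exact hx a ha (hS.trans (sInter_subset_of_mem hB))

theorem exists_ne_mem_of_mem_cylUnion {a : ∀ α, Set (X α)} {u w : ∀ α, X α}
    (hu : u ∈ cylUnion a) (hw : w ∉ cylUnion a) : ∃ α, u α ≠ w α ∧ u α ∈ a α := by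
  obtain ⟨α, hα⟩ := hu
  exact ⟨α, fun h => hw ⟨α, h ▸ hα⟩, hα⟩

theorem sInter_mem_boxProd [Nonempty Ω] (hL : ∀ α, IsSCS (L α)) {ω : Set (Set (∀ α, X α))}
    (hω : ω ⊆ boxProd L) : ⋂₀ ω ∈ boxProd L := by
  have huniv : cylUnion (fun α => (univ : Set (X α))) = univ :=
    eq_univ_of_forall fun _ => ⟨Classical.arbitrary Ω, trivial⟩
  refine ⟨{B | (∃ a : ∀ α, Set (X α), (∀ α, a α ∈ L α) ∧ B = cylUnion a) ∧ ⋂₀ ω ⊆ B},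
    fun B hB => hB.1, ⟨univ, ⟨_, fun α => by simpa using (hL α).1 ∅, huniv.symm⟩,
    subset_univ _⟩, ?_⟩
  refine (subset_sInter fun B hB => hB.2).antisymm fun x hx A hA => ?_
  obtain ⟨ω', hω', -, rfl⟩ := hω hA
  exact mem_sInter.2 fun B hB =>
    hx _ ⟨hω' hB, (sInter_subset_of_mem hA).trans (sInter_subset_of_mem hB)⟩

theorem setOf_apply_mem_mem_boxProd (hL : ∀ α, IsSCS (L α)) {β : Ω} {T : Set (X β)}
    (hT : T ∈ L β) : {x : ∀ α, X α | x β ∈ T} ∈ boxProd L := by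
  classical
  convert cylUnion_mem_boxProd (a := Function.update (fun α => ∅) β T) fun α => ?_ using 1
  · ext x
    refine ⟨fun hx => ⟨β, by simpa using hx⟩, fun ⟨α, hα⟩ => ?_⟩
    obtain rfl | h := eq_or_ne α β
    · simpa using hα
    · simp [Function.update_of_ne h] at hα
  · obtain rfl | h := eq_or_ne α β
    · simpa using hT
    · simpa [Function.update_of_ne h] using (hL α).2.1

theorem setOf_apply_mem_or_mem_boxProd (hL : ∀ α, IsSCS (L α)) {β γ : Ω} (hβγ : β ≠ γ)
    {T : Set (X β)} {U : Set (X γ)} (hT : T ∈ L β) (hU : U ∈ L γ) :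
    {x : ∀ α, X α | x β ∈ T ∨ x γ ∈ U} ∈ boxProd L := by
  classical
  convert cylUnion_mem_boxProd
    (a := Function.update (Function.update (fun α => ∅) β T) γ U) fun α => ?_ using 1
  · ext x
    refine ⟨fun hx => ?_, fun ⟨α, hα⟩ => ?_⟩
    · rcases hx with hx | hx
      · exact ⟨β, by simpa [Function.update_of_ne hβγ] using hx⟩
      · exact ⟨γ, by simpa using hx⟩
    · obtain rfl | hγ := eq_or_ne α γ
      · simp_all
      obtain rfl | hβ := eq_or_ne α β
      · simp_all
      · simp [Function.update_of_ne hβ, Function.update_of_ne hγ] at hα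
  · obtain rfl | hγ := eq_or_ne α γ
    · simpa using hU
    obtain rfl | hβ := eq_or_ne α β
    · simpa [Function.update_of_ne hβγ] using hT
    · simpa [Function.update_of_ne hβ, Function.update_of_ne hγ] using (hL α).2.1

theorem sJoin_boxProd_singleton (hL : ∀ α, IsSCS (L α)) (w : ∀ α, X α) :
    sJoin (boxProd L) {w} = {w} := by
  refine (subset_sJoin _).antisymm' fun r hr => funext fun α => ?_
  exact sJoin_subset (setOf_apply_mem_mem_boxProd hL ((hL α).2.2 (w α)))
    (singleton_subset_iff.2 rfl) hr

theorem isSCS_boxProd [Nonempty Ω] (hL : ∀ α, IsSCS (L α)) : IsSCS (boxProd L) := by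
  refine ⟨fun ω hω => sInter_mem_boxProd hL hω, ?_, fun w => ?_⟩
  · have hempty : cylUnion (fun α => (∅ : Set (X α))) = ∅ :=
      eq_empty_of_forall_notMem fun _ ⟨_, h⟩ => h
    exact hempty ▸ cylUnion_mem_boxProd fun α => (hL α).2.1
  · rw [← sJoin_boxProd_singleton hL w]
    exact sInter_mem_boxProd hL (sep_subset _ _)

section Update

variable [DecidableEq Ω]

theorem eq_of_update_apply_ne {z : ∀ α, X α} {δ α : Ω} {t t' : X δ}
    (h : Function.update z δ t α ≠ Function.update z δ t' α) : α = δ := by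
  by_contra hα
  simp [Function.update_of_ne hα] at h

theorem update_mem_sJoin_boxProd_iff (hL : ∀ α, IsSCS (L α)) (z : ∀ α, X α) {δ : Ω}
    {m : Set (X δ)} (hm : m ∈ L δ) (y y' : X δ) :
    Function.update z δ y' ∈
        sJoin (boxProd L) (insert (Function.update z δ y) {x | x δ ∈ m}) ↔
      y' ∈ sJoin (L δ) (insert y m) := by
  constructor
  · intro h
    have hsub := sJoin_subset (setOf_apply_mem_mem_boxProd hL (sJoin_mem (hL δ) (insert y m)))
      (insert_subset (by simpa using subset_sJoin _ (mem_insert y m))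
        fun x hx => subset_sJoin _ (mem_insert_of_mem y hx)) h
    simpa using hsub
  · rw [mem_sJoin_boxProd_iff]
    intro h a ha hsub
    by_contra hw
    obtain ⟨α, hne, hy⟩ := exists_ne_mem_of_mem_cylUnion (hsub (mem_insert _ _)) hw
    obtain rfl := eq_of_update_apply_ne hne
    rw [Function.update_self] at hy
    by_cases hma : m ⊆ a α
    · exact hw ⟨α, by simpa using sJoin_subset (ha α) (insert_subset hy hma) h⟩
    -- a point of `m` outside `a α` puts `z` into `a` at a coordinate other than `α`
    obtain ⟨t, htm, hta⟩ := not_subset.1 hma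
    have ht : Function.update z α t ∈ cylUnion a :=
      hsub (mem_insert_of_mem _ (by simpa using htm))
    obtain ⟨α', hne', ht'⟩ := exists_ne_mem_of_mem_cylUnion ht hw
    obtain rfl := eq_of_update_apply_ne hne'
    exact hta (by simpa using ht')

theorem HasExchange.of_boxProd [∀ α, Nonempty (X α)] (hL : ∀ α, IsSCS (L α))
    (hex : HasExchange (boxProd L)) (δ : Ω) : HasExchange (L δ) := by
  intro m hm y y' hy hy' h
  rw [← update_mem_sJoin_boxProd_iff hL (Classical.arbitrary _) hm] at h ⊢
  exact hex _ (setOf_apply_mem_mem_boxProd hL hm) _ _ (by simpa using hy) (by simpa using hy') h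

def update₂ (z : ∀ α, X α) (β : Ω) (x : X β) (γ : Ω) (y : X γ) : ∀ α, X α :=
  Function.update (Function.update z β x) γ y

section TwoCoordinates

variable {z : ∀ α, X α} {β γ : Ω} {x x' : X β} {y y' : X γ}

@[simp]
theorem update₂_apply_left (hβγ : β ≠ γ) : update₂ z β x γ y β = x := by
  simp [update₂, Function.update_of_ne hβγ]

@[simp]
theorem update₂_apply_right : update₂ z β x γ y γ = y := by
  simp [update₂]

theorem update₂_apply_of_ne {α : Ω} (hβ : α ≠ β) (hγ : α ≠ γ) : update₂ z β x γ y α = z α := by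
  simp [update₂, Function.update_of_ne hβ, Function.update_of_ne hγ]

theorem update₂_ext (hβγ : β ≠ γ) {r : ∀ α, X α} (hrβ : r β = x) (hrγ : r γ = y)
    (hr : ∀ α, α ≠ β → α ≠ γ → r α = z α) : r = update₂ z β x γ y := by
  funext α
  obtain rfl | hβ := eq_or_ne α β
  · simp [hβγ, hrβ]
  obtain rfl | hγ := eq_or_ne α γ
  · simp [hrγ]
  · rw [hr α hβ hγ, update₂_apply_of_ne hβ hγ]

theorem update₂_mem_cylUnion (hβγ : β ≠ γ) {a : ∀ α, Set (X α)}
    (hu : update₂ z β x γ y ∈ cylUnion a) (hw : update₂ z β x' γ y' ∉ cylUnion a) :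
    (x ≠ x' ∧ x ∈ a β) ∨ (y ≠ y' ∧ y ∈ a γ) := by
  obtain ⟨α, hne, hα⟩ := exists_ne_mem_of_mem_cylUnion hu hw
  obtain rfl | hβ := eq_or_ne α β
  · exact Or.inl ⟨by simpa [hβγ] using hne, by simpa [hβγ] using hα⟩
  obtain rfl | hγ := eq_or_ne α γ
  · exact Or.inr ⟨by simpa using hne, by simpa using hα⟩
  · simp [update₂_apply_of_ne hβ hγ] at hne

theorem sJoin_boxProd_pair_update₂ (hL : ∀ α, IsSCS (L α)) (hβγ : β ≠ γ) (hx : x ≠ x')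
    (hy : y ≠ y') :
    sJoin (boxProd L) {update₂ z β x γ y, update₂ z β x' γ y'} =
      {update₂ z β x γ y, update₂ z β x' γ y'} := by
  refine (subset_sJoin _).antisymm' fun r hr => ?_
  have hr_of_ne : ∀ α, α ≠ β → α ≠ γ → r α = z α := fun α hβ hγ => by
    simpa using sJoin_subset (setOf_apply_mem_mem_boxProd hL ((hL α).2.2 (z α)))
      (by simp [pair_subset_iff, update₂_apply_of_ne hβ hγ]) hr
  have h₁ : r β = x ∨ r γ = y' := by
    simpa using sJoin_subset
      (setOf_apply_mem_or_mem_boxProd hL hβγ ((hL β).2.2 x) ((hL γ).2.2 y'))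
      (by simp [pair_subset_iff, hβγ]) hr
  have h₂ : r β = x' ∨ r γ = y := by
    simpa using sJoin_subset
      (setOf_apply_mem_or_mem_boxProd hL hβγ ((hL β).2.2 x') ((hL γ).2.2 y))
      (by simp [pair_subset_iff, hβγ]) hr
  rcases h₁ with h₁ | h₁ <;> rcases h₂ with h₂ | h₂
  · exact absurd (h₁.symm.trans h₂) hx
  · exact Or.inl (update₂_ext hβγ h₁ h₂ hr_of_ne)
  · exact Or.inr (update₂_ext hβγ h₂ h₁ hr_of_ne)
  · exact absurd (h₂.symm.trans h₁) hy

end TwoCoordinates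

end Update

section Aerts

variable [DecidableEq Ω] [Nonempty Ω] [∀ α, Nonempty (X α)] {β γ : Ω}

theorem not_hasExchange_boxProd (hL : ∀ α, IsSCS (L α)) (hβγ : β ≠ γ)
    {p₁ q₁ r₁ : X β} {p₂ q₂ r₂ : X γ} (hpq₁ : p₁ ≠ q₁) (hpq₂ : p₂ ≠ q₂)
    (hrp₁ : r₁ ≠ p₁) (hrq₁ : r₁ ≠ q₁) (hrq₂ : r₂ ≠ q₂)
    (hp₁ : p₁ ∈ sJoin (L β) {r₁, q₁}) (hq₂ : q₂ ∈ sJoin (L γ) {r₂, p₂}) :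
    ¬ HasExchange (boxProd L) := by
  intro hex
  set z : ∀ α, X α := Classical.arbitrary _
  set u := update₂ z β p₁ γ p₂ with hu
  set v := update₂ z β q₁ γ q₂ with hv
  set w := update₂ z β p₁ γ q₂ with hw
  set s := update₂ z β r₁ γ r₂ with hs
  have hA : ({u, v} : Set (∀ α, X α)) ∈ boxProd L :=
    sJoin_boxProd_pair_update₂ hL hβγ hpq₁ hpq₂ ▸ sJoin_mem (isSCS_boxProd hL) _
  have hsA : s ∉ ({u, v} : Set (∀ α, X α)) := by
    rintro (h | h)
    · exact hrp₁ (by simpa [hs, hu, hβγ] using congrFun h β)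
    · exact hrq₁ (by simpa [hs, hv, hβγ] using congrFun h β)
  have hwA : w ∉ ({u, v} : Set (∀ α, X α)) := by
    rintro (h | h)
    · exact hpq₂ (by simpa [hw, hu] using (congrFun h γ).symm)
    · exact hpq₁ (by simpa [hw, hv, hβγ] using congrFun h β)
  have hw_mem : w ∈ sJoin (boxProd L) (insert s {u, v}) := by
    refine mem_sJoin_boxProd_iff.2 fun a ha hsub => by_contra fun hwa => ?_
    obtain ⟨-, hp₂⟩ : p₂ ≠ q₂ ∧ p₂ ∈ a γ := by
      simpa using update₂_mem_cylUnion hβγ (hsub (mem_insert_of_mem s (mem_insert u _))) hwa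
    obtain ⟨-, hq₁⟩ : q₁ ≠ p₁ ∧ q₁ ∈ a β := by
      simpa using update₂_mem_cylUnion hβγ
        (hsub (mem_insert_of_mem s (mem_insert_of_mem u rfl))) hwa
    rcases update₂_mem_cylUnion hβγ (hsub (mem_insert s _)) hwa with ⟨-, hr₁⟩ | ⟨-, hr₂⟩
    · exact hwa ⟨β, by simpa [hw, hβγ] using sJoin_subset (ha β) (pair_subset hr₁ hq₁) hp₁⟩
    · exact hwa ⟨γ, by simpa [hw] using sJoin_subset (ha γ) (pair_subset hr₂ hp₂) hq₂⟩
  have hs_not_mem : s ∉ sJoin (boxProd L) (insert w {u, v}) := fun hs_mem => by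
    have h := sJoin_subset
      (setOf_apply_mem_or_mem_boxProd hL hβγ ((hL β).2.2 p₁) ((hL γ).2.2 q₂))
      (by simp [insert_subset_iff, hw, hu, hv, hβγ]) hs_mem
    simp only [hs, mem_ofPred_eq, update₂_apply_left hβγ, update₂_apply_right,
      mem_singleton_iff] at h
    exact h.elim hrp₁ hrq₂
  exact hs_not_mem (hex _ hA s w hsA hwA hw_mem)

theorem not_isOrthomodularOn_boxProd (hL : ∀ α, IsSCS (L α)) {f : ∀ α, Set (X α) → Set (X α)}
    (hf : ∀ α, IsOrthoOn (L α) (f α)) (hβγ : β ≠ γ) {p₁ q₁ : X β} {p₂ q₂ : X γ}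
    (hqp₁ : q₁ ≠ p₁) (hq₁ : q₁ ∉ f β {p₁}) (hqp₂ : q₂ ≠ p₂) (hq₂ : q₂ ∉ f γ {p₂}) :
    ¬ IsOrthomodularOn (boxProd L) (sharp f) := by
  intro hom
  set z : ∀ α, X α := Classical.arbitrary _
  set u := update₂ z β p₁ γ p₂ with hu
  set v := update₂ z β q₁ γ q₂ with hv
  have hscs := isSCS_boxProd hL
  have hpair : ({u, v} : Set (∀ α, X α)) ∈ boxProd L :=
    sJoin_boxProd_pair_update₂ hL hβγ hqp₁.symm hqp₂.symm ▸ sJoin_mem hscs _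
  have hdisj : ({u, v} : Set (∀ α, X α)) ∩ sharp f {u} = ∅ := by
    refine eq_empty_of_forall_notMem ?_
    rintro x ⟨rfl | rfl, hx⟩ <;> obtain ⟨α, hα⟩ := hx u rfl
    · exact (hf α).notMem_apply_singleton (hL α) _ hα
    obtain rfl | hβ := eq_or_ne α β
    · exact hq₁ (by simpa [hu, hv, hβγ] using hα)
    obtain rfl | hγ := eq_or_ne α γ
    · exact hq₂ (by simpa [hu, hv] using hα)
    · rw [hv, hu, update₂_apply_of_ne hβ hγ, update₂_apply_of_ne hβ hγ] at hα
      exact (hf α).notMem_apply_singleton (hL α) _ hα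
  have hvu : v ∈ ({u} : Set (∀ α, X α)) := by
    have h := hom {u} (hscs.2.2 u) {u, v} hpair (singleton_subset_iff.2 (mem_insert u _))
    rw [hdisj, union_empty, sJoin_eq_of_mem (hscs.2.2 u)] at h
    exact h ▸ mem_insert_of_mem u rfl
  exact hqp₁ (by simpa [hu, hv, hβγ] using congrFun hvu β)

end Aerts

end BoxProduct

theorem stmt_16_general {Ω : Type*} {X : Ω → Type*} [∀ α, Nonempty (X α)]
    (L : ∀ α, Set (Set (X α))) (hL : ∀ α, IsSCS (L α))
    (f : ∀ α, Set (X α) → Set (X α)) (hf : ∀ α, IsOrthoOn (L α) (f α))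
    (h : HasCovProp (boxProd L) ∨
      (∀ a ∈ boxProd L, ∀ b ∈ boxProd L, a ⊆ b →
        b = sJoin (boxProd L) (a ∪ (b ∩ sharp f a)))) :
    ∀ β γ, L β ≠ Set.univ → L γ ≠ Set.univ → β = γ := by
  classical
  intro β γ hβ hγ
  by_contra hβγ
  have : Nonempty Ω := ⟨β⟩
  obtain ⟨p₁, q₁, hqp₁, hq₁⟩ := (hf β).exists_ne_notMem_of_ne_univ (hL β) hβ
  obtain ⟨p₂, q₂, hqp₂, hq₂⟩ := (hf γ).exists_ne_notMem_of_ne_univ (hL γ) hγ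
  rcases h with hcov | hom
  · have hex := hcov.hasExchange (isSCS_boxProd hL)
    obtain ⟨r₁, hrp₁, hrq₁, hp₁, -⟩ :=
      (hex.of_boxProd hL β).exists_superposition (hL β) (hf β) hqp₁ hq₁
    obtain ⟨r₂, -, hrq₂, -, hq₂'⟩ :=
      (hex.of_boxProd hL γ).exists_superposition (hL γ) (hf γ) hqp₂ hq₂
    exact not_hasExchange_boxProd hL hβγ hqp₁.symm hqp₂.symm hrp₁ hrq₁ hrq₂ hp₁ hq₂' hex
  · exact not_isOrthomodularOn_boxProd hL hf hβγ hqp₁ hq₁ hqp₂ hq₂ hom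

/-- Aerts: if the box product of a family of orthocomplemented simple
closure spaces has the covering property or is orthomodular (for the induced
orthocomplementation `#`), then at most one factor is not a power set. -/
theorem stmt_16 {Ω : Type*} [Nonempty Ω] {X : Ω → Type*} [∀ α, Nonempty (X α)]
    (L : ∀ α, Set (Set (X α))) (hL : ∀ α, IsSCS (L α))
    (f : ∀ α, Set (X α) → Set (X α)) (hf : ∀ α, IsOrthoOn (L α) (f α))
    (h : HasCovProp (boxProd L) ∨
      (∀ a ∈ boxProd L, ∀ b ∈ boxProd L, a ⊆ b →
        b = sJoin (boxProd L) (a ∪ (b ∩ sharp f a)))) :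
    ∀ β γ, L β ≠ Set.univ → L γ ≠ Set.univ → β = γ :=
  stmt_16_general L hL f hf h
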